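/- arXiv:0709.4339 — 4 statements merged into one kernel-verified Lean document; each statement's English description precedes it below -/
import Mathlib

section
/- Let 0 < p < ∞, 0 < q < ∞ and let f : ℝ → ℂ be measurable with compact support. Then lim_{t→0⁺} t^{-1/p} ‖ (D_t f)~ ‖_{L^{p,q}(𝕋)} = ‖f‖_{L^{p,q}(ℝ)}, where (D_t f)~(x) = Σ_{k∈ℤ} f(t⁻¹(x+k)) is the periodization of the dilation D_t f. -/
open MeasureTheory Filter Set
open scoped ENNReal NNReal Topology

noncomputable def distrib {α : Type*} [MeasurableSpace α] (μ : Measure α)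
    (f : α → ℂ) (l : ℝ) : ℝ≥0∞ := μ {x | l < ‖f x‖}

noncomputable def rearr {α : Type*} [MeasurableSpace α] (μ : Measure α)
    (f : α → ℂ) (t : ℝ) : ℝ≥0∞ :=
  ⨅ (l : ℝ≥0) (_ : distrib μ f l ≤ ENNReal.ofReal t), (l : ℝ≥0∞)

noncomputable def lorentzNorm {α : Type*} [MeasurableSpace α] (μ : Measure α)
    (f : α → ℂ) (p q : ℝ≥0∞) : ℝ≥0∞ :=
  if q = ∞ then ⨆ t ∈ Set.Ioi (0:ℝ), ENNReal.ofReal (t ^ p.toReal⁻¹) * rearr μ f t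
  else (ENNReal.ofReal (q.toReal / p.toReal) *
      ∫⁻ t in Set.Ioi (0:ℝ),
        (ENNReal.ofReal (t ^ p.toReal⁻¹) * rearr μ f t) ^ q.toReal / ENNReal.ofReal t)
      ^ q.toReal⁻¹

noncomputable def torusMeasure : Measure ℝ := volume.restrict (Set.Ico (-(1/2) : ℝ) (1/2))

/-! For small `t` the dilate `f (t⁻¹ * ·)` is supported in `(-1/2, 1/2)`, so on the fundamental
domain its periodization is the dilate itself and the distribution function on `𝕋` is `t` times
that of `f`. The decreasing rearrangement is then `s ↦ f* (s / t)`, and the substitution `s = t u`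
in the Lorentz integral produces exactly the factor `t ^ (1/p)`: the expression is eventually
constant. -/

lemma tsum_comp_add_int_eq_self {E : Type*} [AddCommMonoid E] [TopologicalSpace E]
    {F : ℝ → E} (hF : Function.support F ⊆ Metric.ball 0 (1/2)) {x : ℝ} (hx : |x| ≤ 1/2) :
    ∑' k : ℤ, F (x + k) = F x := by
  rw [tsum_eq_single 0 fun k hk => Function.notMem_support.mp fun hmem => ?_]
  · simp
  have hxk : |x + k| < 1/2 := by simpa using hF hmem
  have hk1 : (1:ℝ) ≤ |(k:ℝ)| := by exact_mod_cast Int.one_le_abs hk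
  have : |(k:ℝ)| ≤ |x + k| + |x| := by
    simpa using abs_sub (x + k) x
  linarith

lemma support_comp_inv_mul_subset_ball {E : Type*} [Zero E] {f : ℝ → E} {r t : ℝ}
    (hf : Function.support f ⊆ Metric.ball 0 r) (ht : 0 < t) :
    Function.support (fun x => f (t⁻¹ * x)) ⊆ Metric.ball 0 (t * r) := by
  intro x hx
  have h := hf hx
  simp only [mem_ball_zero_iff, Real.norm_eq_abs, abs_mul, abs_inv, abs_of_pos ht] at h ⊢
  rwa [inv_mul_lt_iff₀ ht] at h

lemma setLIntegral_Ioi_comp_mul_left {t : ℝ} (ht : 0 < t) (F : ℝ → ℝ≥0∞) :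
    ∫⁻ u in Ioi (0:ℝ), F (t * u) = ENNReal.ofReal t⁻¹ * ∫⁻ s in Ioi (0:ℝ), F s := by
  have hemb : MeasurableEmbedding (fun x : ℝ => t * x) := by
    simpa [Homeomorph.coe_mulLeft₀] using
      (Homeomorph.mulLeft₀ t ht.ne').toMeasurableEquiv.measurableEmbedding
  have hpre : (fun x : ℝ => t * x) ⁻¹' Ioi 0 = Ioi 0 := by
    rw [preimage_const_mul_Ioi₀ _ ht, zero_div]
  have hmap : Measure.map (fun x : ℝ => t * x) (volume.restrict (Ioi 0))
      = ENNReal.ofReal t⁻¹ • volume.restrict (Ioi 0) := by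
    rw [← hpre, ← hemb.restrict_map, Real.map_volume_mul_left ht.ne', hpre,
      Measure.restrict_smul, abs_of_pos (inv_pos.mpr ht)]
  rw [← hemb.lintegral_map, hmap, lintegral_smul_measure, smul_eq_mul]

section Distribution

variable {α β : Type*} [MeasurableSpace α] [MeasurableSpace β]

lemma distrib_restrict_of_eqOn {μ : Measure α} {s : Set α} (hs : MeasurableSet s)
    {g h : α → ℂ} (hgh : EqOn g h s) (hh : Function.support h ⊆ s) {l : ℝ} (hl : 0 ≤ l) :
    distrib (μ.restrict s) g l = distrib μ h l := by
  unfold distrib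
  rw [Measure.restrict_apply' hs]
  congr 1
  ext x
  refine ⟨fun ⟨hx, hxs⟩ => (hgh hxs ▸ hx : l < ‖h x‖), fun hx => ?_⟩
  have hxs : x ∈ s := hh fun h0 => by simp [h0] at hx; linarith
  exact ⟨show l < ‖g x‖ by rwa [hgh hxs], hxs⟩

lemma distrib_volume_comp_mul_left (f : ℝ → ℂ) {c : ℝ} (hc : c ≠ 0) (l : ℝ) :
    distrib volume (fun x => f (c * x)) l = ENNReal.ofReal |c⁻¹| * distrib volume f l :=
  Real.volume_preimage_mul_left hc {y | l < ‖f y‖}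

lemma rearr_eq_of_distrib_eq_mul {μ : Measure α} {ν : Measure β} {g : α → ℂ} {f : β → ℂ}
    {t : ℝ} (ht : 0 < t) (h : ∀ l : ℝ≥0, distrib μ g l = ENNReal.ofReal t * distrib ν f l)
    (s : ℝ) : rearr μ g s = rearr ν f (s / t) := by
  unfold rearr
  refine iInf_congr fun l => iInf_congr_Prop ?_ fun _ => rfl
  rw [h l, ENNReal.ofReal_div_of_pos ht,
    ENNReal.le_div_iff_mul_le (Or.inl (by simp [ht])) (Or.inl ENNReal.ofReal_ne_top), mul_comm]

lemma lorentzNorm_eq_of_rearr_eq_comp_div {μ : Measure α} {ν : Measure β} {g : α → ℂ}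
    {f : β → ℂ} {p q t : ℝ} (hp : 0 < p) (hq : 0 < q) (ht : 0 < t)
    (h : ∀ s, rearr μ g s = rearr ν f (s / t)) :
    ENNReal.ofReal (t ^ (-(1/p))) * lorentzNorm μ g (ENNReal.ofReal p) (ENNReal.ofReal q)
      = lorentzNorm ν f (ENNReal.ofReal p) (ENNReal.ofReal q) := by
  have hoft0 : ENNReal.ofReal t ≠ 0 := by simp [ht]
  set I := ∫⁻ u in Ioi (0:ℝ),
    (ENNReal.ofReal (u ^ p⁻¹) * rearr ν f u) ^ q / ENNReal.ofReal u
  have hpoint : ∀ u ∈ Ioi (0:ℝ),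
      (ENNReal.ofReal ((t * u) ^ p⁻¹) * rearr ν f (t * u / t)) ^ q / ENNReal.ofReal (t * u)
        = ENNReal.ofReal (t ^ (p⁻¹ * q)) / ENNReal.ofReal t *
          ((ENNReal.ofReal (u ^ p⁻¹) * rearr ν f u) ^ q / ENNReal.ofReal u) := by
    intro u (hu : 0 < u)
    rw [mul_div_cancel_left₀ _ ht.ne', Real.mul_rpow ht.le hu.le,
      ENNReal.ofReal_mul (Real.rpow_nonneg ht.le _), mul_assoc,
      ENNReal.mul_rpow_of_nonneg _ _ hq.le,
      ENNReal.ofReal_rpow_of_pos (Real.rpow_pos_of_pos ht _),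
      ← Real.rpow_mul ht.le, ENNReal.ofReal_mul ht.le, div_eq_mul_inv, div_eq_mul_inv,
      div_eq_mul_inv, ENNReal.mul_inv (Or.inl hoft0) (Or.inl ENNReal.ofReal_ne_top)]
    ring
  have hintegral : ∫⁻ s in Ioi (0:ℝ),
      (ENNReal.ofReal (s ^ p⁻¹) * rearr μ g s) ^ q / ENNReal.ofReal s
        = ENNReal.ofReal (t ^ (p⁻¹ * q)) * I := by
    have hK : ENNReal.ofReal (t ^ (p⁻¹ * q)) / ENNReal.ofReal t ≠ ∞ :=
      (ENNReal.div_lt_top ENNReal.ofReal_ne_top hoft0).ne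
    calc _ = ∫⁻ s in Ioi (0:ℝ),
          (ENNReal.ofReal (s ^ p⁻¹) * rearr ν f (s / t)) ^ q / ENNReal.ofReal s := by
          simp only [h]
      _ = ENNReal.ofReal t * ∫⁻ u in Ioi (0:ℝ),
          (ENNReal.ofReal ((t * u) ^ p⁻¹) * rearr ν f (t * u / t)) ^ q /
            ENNReal.ofReal (t * u) := by
          rw [setLIntegral_Ioi_comp_mul_left ht
              (fun s => (ENNReal.ofReal (s ^ p⁻¹) * rearr ν f (s / t)) ^ q / ENNReal.ofReal s),
            ← mul_assoc, ← ENNReal.ofReal_mul ht.le,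
            mul_inv_cancel₀ ht.ne', ENNReal.ofReal_one, one_mul]
      _ = ENNReal.ofReal (t ^ (p⁻¹ * q)) * I := by
          rw [setLIntegral_congr_fun measurableSet_Ioi hpoint, lintegral_const_mul' _ _ hK,
            ← mul_assoc, ENNReal.mul_div_cancel hoft0 ENNReal.ofReal_ne_top]
  unfold lorentzNorm
  rw [if_neg ENNReal.ofReal_ne_top, if_neg ENNReal.ofReal_ne_top, ENNReal.toReal_ofReal hp.le,
    ENNReal.toReal_ofReal hq.le, hintegral, mul_left_comm,
    ENNReal.mul_rpow_of_nonneg _ _ (inv_nonneg.mpr hq.le),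
    ENNReal.ofReal_rpow_of_pos (Real.rpow_pos_of_pos ht _), ← Real.rpow_mul ht.le,
    mul_inv_cancel_right₀ hq.ne', ← mul_assoc, ← ENNReal.ofReal_mul (Real.rpow_nonneg ht.le _),
    ← Real.rpow_add ht, one_div, neg_add_cancel, Real.rpow_zero, ENNReal.ofReal_one, one_mul]

end Distribution

lemma distrib_torusMeasure_periodization {f : ℝ → ℂ} {r t : ℝ}
    (hf : Function.support f ⊆ Metric.ball 0 r) (ht : 0 < t) (htr : t * r ≤ 1/2) (l : ℝ≥0) :
    distrib torusMeasure (fun x => ∑' k : ℤ, f (t⁻¹ * (x + k))) l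
      = ENNReal.ofReal t * distrib volume f l := by
  have hsupp : Function.support (fun x => f (t⁻¹ * x)) ⊆ Metric.ball 0 (1/2) :=
    (support_comp_inv_mul_subset_ball hf ht).trans (Metric.ball_subset_ball htr)
  have hball : Metric.ball (0:ℝ) (1/2) ⊆ Ico (-(1/2)) (1/2) := by
    rw [Real.ball_eq_Ioo, zero_sub, zero_add]
    exact Ioo_subset_Ico_self
  have hperiod : EqOn (fun x => ∑' k : ℤ, f (t⁻¹ * (x + k))) (fun x => f (t⁻¹ * x))
      (Ico (-(1/2)) (1/2)) := fun x hx =>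
    tsum_comp_add_int_eq_self (F := fun y => f (t⁻¹ * y)) hsupp (abs_le.mpr ⟨hx.1, hx.2.le⟩)
  rw [torusMeasure, distrib_restrict_of_eqOn measurableSet_Ico hperiod (hsupp.trans hball)
    l.coe_nonneg, distrib_volume_comp_mul_left f (inv_ne_zero ht.ne'), inv_inv, abs_of_pos ht]

theorem stmt4_general (p q : ℝ) (hp : 0 < p) (hq : 0 < q) (f : ℝ → ℂ)
    (hsupp : HasCompactSupport f) :
    Tendsto (fun t : ℝ => ENNReal.ofReal (t ^ (-(1/p))) *
        lorentzNorm torusMeasure (fun x => ∑' k : ℤ, f (t⁻¹ * (x + k)))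
          (ENNReal.ofReal p) (ENNReal.ofReal q))
      (𝓝[>] 0)
      (𝓝 (lorentzNorm volume f (ENNReal.ofReal p) (ENNReal.ofReal q))) := by
  obtain ⟨r, hr⟩ := (Metric.isBounded_iff_subset_ball 0).mp hsupp.isCompact.isBounded
  have hf : Function.support f ⊆ Metric.ball 0 r := (subset_tsupport f).trans hr
  have hsmall : ∀ᶠ t in 𝓝[>] (0:ℝ), t * r ≤ 1/2 := by
    have : Tendsto (fun t : ℝ => t * r) (𝓝 0) (𝓝 0) := by
      simpa using (continuous_mul_const r).tendsto 0
    exact nhdsWithin_le_nhds (this.eventually (ge_mem_nhds (by norm_num)))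
  refine tendsto_const_nhds.congr' ?_
  filter_upwards [self_mem_nhdsWithin, hsmall] with t (ht : 0 < t) htr
  exact (lorentzNorm_eq_of_rearr_eq_comp_div hp hq ht
    (rearr_eq_of_distrib_eq_mul ht (distrib_torusMeasure_periodization hf ht htr))).symm

theorem stmt4 (p q : ℝ) (hp : 0 < p) (hq : 0 < q) (f : ℝ → ℂ) (hf : Measurable f)
    (hsupp : HasCompactSupport f) :
    Tendsto (fun t : ℝ => ENNReal.ofReal (t ^ (-(1/p))) *
        lorentzNorm torusMeasure (fun x => ∑' k : ℤ, f (t⁻¹ * (x + k)))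
          (ENNReal.ofReal p) (ENNReal.ofReal q))
      (𝓝[>] 0)
      (𝓝 (lorentzNorm volume f (ENNReal.ofReal p) (ENNReal.ofReal q))) :=
  stmt4_general p q hp hq f hsupp
end

section
/- Let f be a 1-periodic measurable function, φ ∈ S(ℝ) radial and nonincreasing on [0,∞), and ε, λ, t > 0. Then the distribution function satisfies the pointwise estimate m_{f · (φ∘(ε·))}(t) ≤ (λε⁻¹ + 1) m_f(t φ(0)⁻¹) + (λε⁻¹ + 2) Σ_{n=0}^∞ 2^n m_f(t φ(λ 2^{n-1})⁻¹), where on the left m denotes Lebesgue measure on ℝ and on the right m_f denotes the distribution on 𝕋 = [-1/2,1/2). -/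
open MeasureTheory Filter Set
open scoped ENNReal NNReal Topology

/-!
Split the superlevel set of `f · φ(ε ·)` according to `ε |x|`: on `ε |x| ≤ l/2` one has
`φ(εx) ≤ φ(0)`, and on the dyadic shell `l 2^(n-1) ≤ ε |x| ≤ l 2^n` one has `φ(εx) ≤ φ(l 2^(n-1))`.
The ball and the shells are covered by `l ε⁻¹ + 1`, resp. `l 2^n ε⁻¹ + 2`, unit intervals,
and by periodicity `f` restricted to a unit interval has the same distribution as on the torus.
-/

open Function

section PeriodicSet

variable {A : Set ℝ}

theorem volume_inter_Ioc_add_one (hA : MeasurableSet A) (hper : Periodic (· ∈ A) 1) (a : ℝ) :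
    volume (A ∩ Ioc a (a + 1)) = torusMeasure A := by
  have hinv : ∀ g : AddSubgroup.zmultiples (1 : ℝ), (g +ᵥ ·) ⁻¹' A = A := by
    rintro ⟨_, k, rfl⟩
    ext x
    show k • (1 : ℝ) + x ∈ A ↔ x ∈ A
    rw [add_comm]
    exact iff_of_eq (hper.zsmul k x)
  rw [torusMeasure, Measure.restrict_congr_set Ico_ae_eq_Ioc,
    Measure.restrict_apply' measurableSet_Ioc]
  convert (isAddFundamentalDomain_Ioc one_pos a volume).measure_set_eq
    (isAddFundamentalDomain_Ioc one_pos (-(1 / 2)) volume) hA hinv using 3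
  norm_num

theorem volume_inter_Ioc_add_natCast_le (hA : MeasurableSet A) (hper : Periodic (· ∈ A) 1)
    (c : ℝ) (n : ℕ) : volume (A ∩ Ioc c (c + n)) ≤ n * torusMeasure A := by
  induction n with
  | zero => simp
  | succ n ih =>
    rw [Nat.cast_succ, ← add_assoc, ← Ioc_union_Ioc_eq_Ioc (b := c + n) (by simp) (by simp),
      inter_union_distrib_left, Nat.cast_succ, add_one_mul]
    exact (measure_union_le _ _).trans
      (add_le_add ih (volume_inter_Ioc_add_one hA hper _).le)

theorem volume_inter_Ioc_le (hA : MeasurableSet A) (hper : Periodic (· ∈ A) 1) (c d : ℝ) :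
    volume (A ∩ Ioc c d) ≤ ENNReal.ofReal (d - c + 1) * torusMeasure A := by
  rcases le_or_gt d c with hdc | hcd
  · simp [Ioc_eq_empty_of_le hdc]
  calc volume (A ∩ Ioc c d) ≤ volume (A ∩ Ioc c (c + ⌈d - c⌉₊)) := by
        gcongr
        linarith [Nat.le_ceil (d - c)]
    _ ≤ ⌈d - c⌉₊ * torusMeasure A := volume_inter_Ioc_add_natCast_le hA hper c _
    _ ≤ ENNReal.ofReal (d - c + 1) * torusMeasure A := by
        rw [← ENNReal.ofReal_natCast]
        gcongr
        exact (Nat.ceil_lt_add_one (sub_nonneg.2 hcd.le)).le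

theorem volume_inter_Icc_le (hA : MeasurableSet A) (hper : Periodic (· ∈ A) 1) (c d : ℝ) :
    volume (A ∩ Icc c d) ≤ ENNReal.ofReal (d - c + 1) * torusMeasure A := by
  rw [← measure_congr ((ae_eq_refl A).inter Ioc_ae_eq_Icc)]
  exact volume_inter_Ioc_le hA hper c d

theorem volume_inter_abs_mem_Icc_le (hA : MeasurableSet A) (hper : Periodic (· ∈ A) 1)
    (r R : ℝ) :
    volume (A ∩ {x | r ≤ |x| ∧ |x| ≤ R}) ≤ ENNReal.ofReal (2 * (R - r + 1)) * torusMeasure A := by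
  have hshell : {x : ℝ | r ≤ |x| ∧ |x| ≤ R} ⊆ Icc (-R) (-r) ∪ Icc r R := by
    rintro x ⟨hr, hR⟩
    rcases le_or_gt 0 x with hx | hx
    · rw [abs_of_nonneg hx] at hr hR
      exact Or.inr ⟨hr, hR⟩
    · rw [abs_of_neg hx] at hr hR
      exact Or.inl ⟨by linarith, by linarith⟩
  calc volume (A ∩ {x | r ≤ |x| ∧ |x| ≤ R})
      ≤ volume (A ∩ Icc (-R) (-r)) + volume (A ∩ Icc r R) := by
        refine (measure_mono (inter_subset_inter_right A hshell)).trans ?_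
        rw [inter_union_distrib_left]
        exact measure_union_le _ _
    _ ≤ ENNReal.ofReal (2 * (R - r + 1)) * torusMeasure A := by
        rw [ENNReal.ofReal_mul zero_le_two, ENNReal.ofReal_ofNat, mul_assoc, two_mul]
        gcongr <;> refine (volume_inter_Icc_le hA hper _ _).trans_eq ?_ <;> ring_nf

end PeriodicSet

theorem apply_le_of_abs_le {φ : ℝ → ℝ} (heven : ∀ x, φ (-x) = φ x)
    (hmono : AntitoneOn φ (Ici 0)) {x y : ℝ} (h : |x| ≤ |y|) : φ y ≤ φ x := by
  have habs : ∀ z, φ |z| = φ z := fun z => by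
    rcases abs_choice z with hz | hz <;> rw [hz]
    exact heven z
  rw [← habs x, ← habs y]
  exact hmono (abs_nonneg x) (abs_nonneg y) h

theorem mul_inv_lt_of_lt_mul_of_le {t u p q : ℝ} (ht : 0 < t) (hu : 0 ≤ u) (h : t < u * p)
    (hpq : p ≤ q) : t * q⁻¹ < u := by
  have hq : 0 < q := by
    by_contra! hq
    nlinarith [mul_le_mul_of_nonneg_left hpq hu, mul_nonpos_of_nonneg_of_nonpos hu hq]
  rw [← div_eq_mul_inv, div_lt_iff₀ hq]
  nlinarith [mul_le_mul_of_nonneg_left hpq hu]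

theorem exists_two_rpow_sub_one_le_le {l y : ℝ} (hl : 0 < l) (hy : l / 2 < y) :
    ∃ n : ℕ, l * 2 ^ ((n : ℝ) - 1) ≤ y ∧ y ≤ 2 * (l * 2 ^ ((n : ℝ) - 1)) := by
  obtain ⟨n, hlow, hup⟩ := exists_nat_pow_near (x := 2 * y / l)
    (by rw [le_div_iff₀ hl]; linarith) one_lt_two
  rw [le_div_iff₀ hl] at hlow
  rw [div_lt_iff₀ hl, pow_succ] at hup
  refine ⟨n, ?_, ?_⟩ <;>
    rw [Real.rpow_sub two_pos, Real.rpow_one, Real.rpow_natCast] <;> linarith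

theorem two_mul_dyadic_shell_width_le {ε : ℝ} (hε : 0 < ε) (l : ℝ) (n : ℕ) :
    2 * (2 * (l * 2 ^ ((n : ℝ) - 1)) / ε - l * 2 ^ ((n : ℝ) - 1) / ε + 1)
      ≤ (l * ε⁻¹ + 2) * 2 ^ n := by
  rw [Real.rpow_sub two_pos, Real.rpow_one, Real.rpow_natCast]
  have h1 : (1 : ℝ) ≤ 2 ^ n := one_le_pow₀ one_le_two
  field_simp
  nlinarith

theorem setOf_lt_norm_mul_subset (f : ℝ → ℂ) {φ : ℝ → ℝ} (hpos : ∀ x, 0 ≤ φ x)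
    (heven : ∀ x, φ (-x) = φ x) (hmono : AntitoneOn φ (Ici 0)) {ε l t : ℝ} (hε : 0 < ε)
    (hl : 0 < l) (ht : 0 < t) :
    {x | t < ‖f x * φ (ε * x)‖} ⊆
      ({x | t * (φ 0)⁻¹ < ‖f x‖} ∩ Icc (-(l / (2 * ε))) (l / (2 * ε))) ∪
        ⋃ n : ℕ, {x | t * (φ (l * 2 ^ ((n : ℝ) - 1)))⁻¹ < ‖f x‖} ∩
          {x | l * 2 ^ ((n : ℝ) - 1) / ε ≤ |x| ∧ |x| ≤ 2 * (l * 2 ^ ((n : ℝ) - 1)) / ε} := by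
  intro x hx
  replace hx : t < ‖f x‖ * φ (ε * x) := by
    simpa only [mem_ofPred_eq, norm_mul, Complex.norm_real, Real.norm_of_nonneg (hpos _)] using hx
  have hεx : |ε * x| = ε * |x| := by rw [abs_mul, abs_of_pos hε]
  rcases le_or_gt (ε * |x|) (l / 2) with hsmall | hlarge
  · refine Or.inl ⟨mul_inv_lt_of_lt_mul_of_le ht (norm_nonneg _) hx
      (apply_le_of_abs_le heven hmono (by rw [abs_zero]; exact abs_nonneg _)), abs_le.1 ?_⟩
    rw [le_div_iff₀ (by positivity)]
    linarith
  · obtain ⟨n, hlow, hup⟩ := exists_two_rpow_sub_one_le_le hl hlarge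
    have ha : 0 < l * 2 ^ ((n : ℝ) - 1) := by positivity
    refine Or.inr (mem_iUnion.2 ⟨n, mul_inv_lt_of_lt_mul_of_le ht (norm_nonneg _) hx
      (apply_le_of_abs_le heven hmono (by rwa [abs_of_pos ha, hεx])), ?_, ?_⟩)
    · rw [div_le_iff₀ hε]
      linarith
    · rw [le_div_iff₀ hε]
      linarith

theorem stmt11_general (f : ℝ → ℂ) (hf : Measurable f) (hper : Function.Periodic f 1)
    (φ : ℝ → ℝ) (hpos : ∀ x, 0 ≤ φ x) (heven : ∀ x, φ (-x) = φ x)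
    (hmono : AntitoneOn φ (Set.Ici 0)) (ε l t : ℝ) (hε : 0 < ε) (hl : 0 < l) (ht : 0 < t) :
    distrib volume (fun x => f x * Complex.ofReal (φ (ε * x))) t
      ≤ ENNReal.ofReal (l * ε⁻¹ + 1) * distrib torusMeasure f (t * (φ 0)⁻¹)
        + ENNReal.ofReal (l * ε⁻¹ + 2) *
            ∑' n : ℕ, 2 ^ n * distrib torusMeasure f (t * (φ (l * 2 ^ ((n:ℝ) - 1)))⁻¹) := by
  have hmeas (s : ℝ) : MeasurableSet {x | s < ‖f x‖} := measurableSet_lt measurable_const hf.norm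
  have hperiodic (s : ℝ) : Periodic (· ∈ {x | s < ‖f x‖}) 1 := hper.comp (s < ‖·‖)
  calc distrib volume (fun x => f x * Complex.ofReal (φ (ε * x))) t
      ≤ volume ({x | t * (φ 0)⁻¹ < ‖f x‖} ∩ Icc (-(l / (2 * ε))) (l / (2 * ε)))
        + ∑' n : ℕ, volume ({x | t * (φ (l * 2 ^ ((n : ℝ) - 1)))⁻¹ < ‖f x‖} ∩
          {x | l * 2 ^ ((n : ℝ) - 1) / ε ≤ |x| ∧ |x| ≤ 2 * (l * 2 ^ ((n : ℝ) - 1)) / ε}) :=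
        (measure_mono (setOf_lt_norm_mul_subset f hpos heven hmono hε hl ht)).trans
          ((measure_union_le _ _).trans (add_le_add le_rfl (measure_iUnion_le _)))
    _ ≤ _ := by
      rw [← ENNReal.tsum_mul_left]
      gcongr with n
      · refine (volume_inter_Icc_le (hmeas _) (hperiodic _) _ _).trans_eq ?_
        congr 2
        field_simp
        ring
      · rw [← mul_assoc (ENNReal.ofReal _)]
        refine (volume_inter_abs_mem_Icc_le (hmeas _) (hperiodic _) _ _).trans
          (mul_le_mul_of_nonneg_right ?_ zero_le)
        rw [← ENNReal.ofReal_ofNat 2, ← ENNReal.ofReal_pow zero_le_two,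
          ← ENNReal.ofReal_mul (by positivity)]
        exact ENNReal.ofReal_le_ofReal (two_mul_dyadic_shell_width_le hε l n)

theorem stmt11 (f : ℝ → ℂ) (hf : Measurable f) (hper : Function.Periodic f 1)
    (φ : ℝ → ℝ) (hφ : Measurable φ) (hpos : ∀ x, 0 ≤ φ x) (heven : ∀ x, φ (-x) = φ x)
    (hmono : AntitoneOn φ (Set.Ici 0)) (ε l t : ℝ) (hε : 0 < ε) (hl : 0 < l) (ht : 0 < t) :
    distrib volume (fun x => f x * Complex.ofReal (φ (ε * x))) t
      ≤ ENNReal.ofReal (l * ε⁻¹ + 1) * distrib torusMeasure f (t * (φ 0)⁻¹)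
        + ENNReal.ofReal (l * ε⁻¹ + 2) *
            ∑' n : ℕ, 2 ^ n * distrib torusMeasure f (t * (φ (l * 2 ^ ((n:ℝ) - 1)))⁻¹) :=
  stmt11_general f hf hper φ hpos heven hmono ε l t hε hl ht
end

section
/- Let 0 < p < ∞, let f be a 1-periodic function in L^p(𝕋), and let φ ∈ S(ℝ) be radial and decreasing on [0,∞). Then lim_{ε→0⁺} ‖ f · D_{ε⁻¹}^p φ ‖_{L^p(ℝ)} = ‖φ‖_{L^p(ℝ)} ‖f‖_{L^p(𝕋)}, where D_{ε⁻¹}^p φ(x) = ε^{1/p} φ(εx). -/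
open MeasureTheory Filter Set
open scoped ENNReal NNReal Topology

/-! Write `g = ‖f‖ₑ ^ p`, a `1`-periodic function with integral `P` over a period, and
`ψ = φ ^ p`, which is even and decreasing in `|x|`. The `p`-th power of the rescaled norm is
`ε ∫ g(x) ψ(εx) dx`, and by the layer-cake formula this equals
`∫_{t > 0} ε ∫_{ψ(εx) > t} g(x) dx dt`. The superlevel set `{ψ(ε ·) > t}` is an interval of
length `ℓ(t) / ε`, where `ℓ(t) = |{ψ > t}|`; an interval of length `L` contains `⌊L⌋` whole
periods and is covered by `⌊L⌋ + 1` of them, so `ε ∫_{ψ(εx) > t} g` is within `εP` of `ℓ(t) P`,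
and both vanish once `t ≥ ψ 0`. Integrating in `t`, the `p`-th power of the norm is within
`ε ψ(0) P` of `‖φ‖_p^p P`. -/

theorem Set.OrdConnected.exists_Ioo_subset_subset_Icc {α : Type*}
    [ConditionallyCompleteLinearOrder α] [Nonempty α] {s : Set α} (hs : s.OrdConnected)
    (hb : BddBelow s) (ha : BddAbove s) :
    ∃ c d, Ioo c d ⊆ s ∧ s ⊆ Icc c d := by
  rcases s.eq_empty_or_nonempty with rfl | hne
  · obtain ⟨a⟩ := ‹Nonempty α›
    exact ⟨a, a, by simp, empty_subset _⟩
  refine ⟨sInf s, sSup s, fun x hx => ?_, subset_Icc_csInf_csSup hb ha⟩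
  obtain ⟨y, hy, hyx⟩ := exists_lt_of_csInf_lt hne hx.1
  obtain ⟨z, hz, hxz⟩ := exists_lt_of_lt_csSup hne hx.2
  exact hs.out hy hz ⟨hyx.le, hxz.le⟩

theorem lintegral_mul_ofReal_eq_lintegral_setLIntegral_setOf_lt {α : Type*}
    [MeasurableSpace α] (μ : Measure α) {g : α → ℝ≥0∞} (hg : Measurable g) {f : α → ℝ}
    (hf0 : ∀ x, 0 ≤ f x) (hf : Measurable f) :
    ∫⁻ x, g x * ENNReal.ofReal (f x) ∂μ = ∫⁻ t in Ioi 0, ∫⁻ x in {x | t < f x}, g x ∂μ := by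
  have h := lintegral_withDensity_eq_lintegral_mul μ hg hf.ennreal_ofReal
  simp only [Pi.mul_apply] at h
  rw [← h, lintegral_eq_lintegral_meas_lt _ (ae_of_all _ hf0) hf.aemeasurable]
  exact lintegral_congr fun t => withDensity_apply g (measurableSet_lt measurable_const hf)

theorem lintegral_mul_ofReal_rescale_eq {g : ℝ → ℝ≥0∞} (hg : Measurable g) {ψ : ℝ → ℝ}
    (hψ0 : ∀ x, 0 ≤ ψ x) (hψ : Measurable ψ) {ε : ℝ} (hε : 0 ≤ ε) :
    ∫⁻ x, g x * ENNReal.ofReal (ε * ψ (ε * x))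
      = ∫⁻ t in Ioi 0, ENNReal.ofReal ε * ∫⁻ x in {x | t < ψ (ε * x)}, g x := by
  simp_rw [ENNReal.ofReal_mul hε, mul_left_comm _ (ENNReal.ofReal ε)]
  rw [lintegral_const_mul' _ _ ENNReal.ofReal_ne_top,
    lintegral_const_mul' _ _ ENNReal.ofReal_ne_top,
    lintegral_mul_ofReal_eq_lintegral_setLIntegral_setOf_lt _ hg (fun x => hψ0 _)
      (hψ.comp (measurable_const_mul ε))]

theorem ENNReal.tendsto_nhdsGT_zero_of_le_add_mul {F : ℝ → ℝ≥0∞} {L C : ℝ≥0∞} (hC : C ≠ ∞)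
    (hup : ∀ ε > 0, F ε ≤ L + ENNReal.ofReal ε * C)
    (hlo : ∀ ε > 0, L ≤ F ε + ENNReal.ofReal ε * C) :
    Tendsto F (𝓝[>] 0) (𝓝 L) := by
  have herr : Tendsto (fun ε => ENNReal.ofReal ε * C) (𝓝[>] 0) (𝓝 0) := by
    simpa using ENNReal.Tendsto.mul_const ((ENNReal.continuous_ofReal.tendsto 0).mono_left
      (nhdsWithin_le_nhds (s := Ioi 0))) (Or.inr hC)
  refine tendsto_of_tendsto_of_tendsto_of_le_of_le'
    (by simpa using ENNReal.Tendsto.sub tendsto_const_nhds herr (Or.inr zero_ne_top))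
    (by simpa using tendsto_const_nhds.add herr) ?_ ?_
  · filter_upwards [self_mem_nhdsWithin] with ε hε using tsub_le_iff_right.2 (hlo ε hε)
  · filter_upwards [self_mem_nhdsWithin] with ε hε using hup ε hε

theorem eLpNorm_ofReal_eq_lintegral {α E : Type*} [MeasurableSpace α] [NormedAddCommGroup E]
    {p : ℝ} (hp : 0 < p) (f : α → E) (μ : Measure α) :
    eLpNorm f (ENNReal.ofReal p) μ = (∫⁻ x, ‖f x‖ₑ ^ p ∂μ) ^ (1 / p) := by
  rw [eLpNorm_eq_lintegral_rpow_enorm_toReal (by simpa using hp) ENNReal.ofReal_ne_top,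
    ENNReal.toReal_ofReal hp.le]

def RadialAntitone (ψ : ℝ → ℝ) : Prop := ∀ ⦃x y : ℝ⦄, |x| ≤ |y| → ψ y ≤ ψ x

theorem radialAntitone_of_even_of_antitoneOn {ψ : ℝ → ℝ} (heven : ∀ x, ψ (-x) = ψ x)
    (hmono : AntitoneOn ψ (Ici 0)) : RadialAntitone ψ := by
  have habs (x : ℝ) : ψ |x| = ψ x := by
    rcases abs_choice x with h | h <;> rw [h]
    exact heven x
  intro x y hxy
  rw [← habs x, ← habs y]
  exact hmono (abs_nonneg x) (abs_nonneg y) hxy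

namespace RadialAntitone

variable {ψ : ℝ → ℝ}

theorem comp_const_mul (hψ : RadialAntitone ψ) (c : ℝ) : RadialAntitone (fun x => ψ (c * x)) :=
  fun _ _ h => hψ (by rw [abs_mul, abs_mul]; gcongr)

theorem rpow_const (hψ : RadialAntitone ψ) (h0 : ∀ x, 0 ≤ ψ x) {p : ℝ} (hp : 0 ≤ p) :
    RadialAntitone (fun x => ψ x ^ p) :=
  fun _ y h => Real.rpow_le_rpow (h0 y) (hψ h) hp

theorem nonneg (hψ : RadialAntitone ψ) (htop : Tendsto ψ atTop (𝓝 0)) (x : ℝ) : 0 ≤ ψ x :=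
  le_of_tendsto htop <| (eventually_ge_atTop |x|).mono fun _ hy => hψ (hy.trans (le_abs_self _))

theorem setOf_lt_eq_empty (hψ : RadialAntitone ψ) {t : ℝ} (ht : ψ 0 ≤ t) :
    {x | t < ψ x} = ∅ :=
  eq_empty_of_forall_notMem fun _ hx => (hx.trans_le (hψ (by simp))).not_ge ht

theorem ordConnected_setOf_lt (hψ : RadialAntitone ψ) (t : ℝ) : {x | t < ψ x}.OrdConnected := by
  refine ⟨fun u hu v hv w hw => ?_⟩
  have hw' := abs_le_max_abs_abs hw.1 hw.2
  rcases max_choice |u| |v| with h | h <;> rw [h] at hw'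
  exacts [hu.trans_le (hψ hw'), hv.trans_le (hψ hw')]

theorem isBounded_setOf_lt (hψ : RadialAntitone ψ) (htop : Tendsto ψ atTop (𝓝 0)) {t : ℝ}
    (ht : 0 < t) : Bornology.IsBounded {x | t < ψ x} := by
  obtain ⟨R, hR⟩ := eventually_atTop.1 (htop.eventually (gt_mem_nhds ht))
  refine (Metric.isBounded_Icc (-R) R).subset fun x hx => abs_le.1 ?_
  by_contra! h
  exact (hR |x| h.le).not_gt (hx.trans_le (hψ (abs_abs x).le))

end RadialAntitone

namespace Function.Periodic

variable {g : ℝ → ℝ≥0∞}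

theorem setLIntegral_Ioc_add_one (hg : Periodic g 1) (t : ℝ) :
    ∫⁻ x in Ioc t (t + 1), g x = ∫⁻ x in Ioc 0 1, g x := by
  have h (s : ℝ) : ∫⁻ x in Ioc s (s + 1), g x = ∫⁻ y : UnitAddCircle, hg.lift y := by
    simp only [← UnitAddCircle.lintegral_preimage s, hg.lift_coe]
  exact (h t).trans (by simpa using (h 0).symm)

theorem setLIntegral_Ioc_add_natCast (hg : Periodic g 1) (a : ℝ) (n : ℕ) :
    ∫⁻ x in Ioc a (a + n), g x = n * ∫⁻ x in Ioc 0 1, g x := by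
  induction n with
  | zero => simp
  | succ n ih =>
    have hn : a ≤ a + n := by simp
    rw [Nat.cast_succ, ← add_assoc, ← Ioc_union_Ioc_eq_Ioc hn (by linarith),
      lintegral_union measurableSet_Ioc (Ioc_disjoint_Ioc_of_le le_rfl), ih,
      hg.setLIntegral_Ioc_add_one]
    push_cast
    ring

theorem setLIntegral_le_of_subset_Icc (hg : Periodic g 1) {s : Set ℝ} {c d : ℝ}
    (hs : s ⊆ Icc c d) :
    ∫⁻ x in s, g x ≤ (ENNReal.ofReal (d - c) + 1) * ∫⁻ x in Ioc 0 1, g x := by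
  set n := ⌊d - c⌋₊ + 1
  have hcover : s ⊆ Ioc (d - n) (d - n + n) := by
    have := Nat.lt_floor_add_one (d - c)
    refine hs.trans fun x hx => ⟨?_, ?_⟩ <;> simp only [n, Nat.cast_add, Nat.cast_one] <;>
      linarith [hx.1, hx.2]
  have hn : (n : ℝ≥0∞) ≤ ENNReal.ofReal (d - c) + 1 := by
    simp only [n, Nat.cast_add, Nat.cast_one]
    gcongr
    rcases le_total 0 (d - c) with h | h
    · rw [← ENNReal.ofReal_natCast]; exact ENNReal.ofReal_le_ofReal (Nat.floor_le h)
    · simp [Nat.floor_eq_zero.mpr (h.trans_lt one_pos)]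
  calc ∫⁻ x in s, g x ≤ ∫⁻ x in Ioc (d - n) (d - n + n), g x := lintegral_mono_set hcover
    _ = n * ∫⁻ x in Ioc 0 1, g x := hg.setLIntegral_Ioc_add_natCast _ n
    _ ≤ _ := by gcongr

theorem mul_le_setLIntegral_add_of_Ioo_subset (hg : Periodic g 1) {s : Set ℝ} {c d : ℝ}
    (hs : Ioo c d ⊆ s) :
    ENNReal.ofReal (d - c) * ∫⁻ x in Ioc 0 1, g x ≤ (∫⁻ x in s, g x) + ∫⁻ x in Ioc 0 1, g x := by
  set n := ⌊d - c⌋₊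
  have hlen : ENNReal.ofReal (d - c) ≤ n + 1 := by
    rw [← ENNReal.ofReal_natCast, ← ENNReal.ofReal_one,
      ← ENNReal.ofReal_add (by positivity) zero_le_one]
    exact ENNReal.ofReal_le_ofReal (Nat.lt_floor_add_one _).le
  have hinside : Ioo c (c + n) ⊆ s := by
    rcases le_total 0 (d - c) with h | h
    · exact (Ioo_subset_Ioo_right (by linarith [Nat.floor_le h])).trans hs
    · simp [n, Nat.floor_eq_zero.mpr (h.trans_lt one_pos)]
  calc ENNReal.ofReal (d - c) * ∫⁻ x in Ioc 0 1, g x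
      ≤ (n + 1) * ∫⁻ x in Ioc 0 1, g x := by gcongr
    _ = (∫⁻ x in Ioo c (c + n), g x) + ∫⁻ x in Ioc 0 1, g x := by
      rw [setLIntegral_congr Ioo_ae_eq_Ioc, hg.setLIntegral_Ioc_add_natCast, add_one_mul]
    _ ≤ _ := by gcongr

theorem setLIntegral_preimage_const_mul_le (hg : Periodic g 1) {s : Set ℝ} {c d : ℝ}
    (h₁ : Ioo c d ⊆ s) (h₂ : s ⊆ Icc c d) {ε : ℝ} (hε : 0 < ε) :
    ENNReal.ofReal ε * ∫⁻ x in (ε * ·) ⁻¹' s, g x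
        ≤ volume s * (∫⁻ x in Ioc 0 1, g x)
          + ENNReal.ofReal ε * ∫⁻ x in Ioc 0 1, g x ∧
      volume s * ∫⁻ x in Ioc 0 1, g x
        ≤ ENNReal.ofReal ε * (∫⁻ x in (ε * ·) ⁻¹' s, g x)
          + ENNReal.ofReal ε * ∫⁻ x in Ioc 0 1, g x := by
  set P := ∫⁻ x in Ioc 0 1, g x
  have hvol : volume s = ENNReal.ofReal (d - c) :=
    le_antisymm ((measure_mono h₂).trans_eq Real.volume_Icc)
      (Real.volume_Ioo.symm.trans_le (measure_mono h₁))
  have hscale : ENNReal.ofReal ε * ENNReal.ofReal (d / ε - c / ε) = ENNReal.ofReal (d - c) := by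
    rw [← ENNReal.ofReal_mul hε.le]
    congr 1
    field_simp
  have h₁ε : Ioo (c / ε) (d / ε) ⊆ (ε * ·) ⁻¹' s := by
    rw [← preimage_const_mul_Ioo₀ c d hε]; exact preimage_mono h₁
  have h₂ε : (ε * ·) ⁻¹' s ⊆ Icc (c / ε) (d / ε) := by
    rw [← preimage_const_mul_Icc₀ c d hε]; exact preimage_mono h₂
  constructor
  · calc ENNReal.ofReal ε * ∫⁻ x in (ε * ·) ⁻¹' s, g x
        ≤ ENNReal.ofReal ε * ((ENNReal.ofReal (d / ε - c / ε) + 1) * P) := by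
          gcongr; exact hg.setLIntegral_le_of_subset_Icc h₂ε
      _ = volume s * P + ENNReal.ofReal ε * P := by rw [hvol, ← hscale]; ring
  · calc volume s * P = ENNReal.ofReal ε * (ENNReal.ofReal (d / ε - c / ε) * P) := by
          rw [hvol, ← hscale, mul_assoc]
      _ ≤ ENNReal.ofReal ε * ((∫⁻ x in (ε * ·) ⁻¹' s, g x) + P) := by
          gcongr; exact hg.mul_le_setLIntegral_add_of_Ioo_subset h₁ε
      _ = _ := mul_add _ _ _

/-- Above `ψ 0` both superlevel sets are empty, so the error term can be cut off there, which
makes it integrable in `t`. -/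
theorem setLIntegral_superlevel_rescale_le (hg : Periodic g 1) {ψ : ℝ → ℝ}
    (hψ : RadialAntitone ψ) (htop : Tendsto ψ atTop (𝓝 0)) {t ε : ℝ} (ht : 0 < t) (hε : 0 < ε) :
    ENNReal.ofReal ε * ∫⁻ x in {x | t < ψ (ε * x)}, g x
        ≤ volume {u | t < ψ u} * (∫⁻ x in Ioc 0 1, g x)
          + (Iio (ψ 0)).indicator (fun _ => ENNReal.ofReal ε * ∫⁻ x in Ioc 0 1, g x) t ∧
      volume {u | t < ψ u} * ∫⁻ x in Ioc 0 1, g x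
        ≤ ENNReal.ofReal ε * (∫⁻ x in {x | t < ψ (ε * x)}, g x)
          + (Iio (ψ 0)).indicator (fun _ => ENNReal.ofReal ε * ∫⁻ x in Ioc 0 1, g x) t := by
  rcases lt_or_ge t (ψ 0) with htψ | htψ
  · rw [indicator_of_mem (mem_Iio.2 htψ)]
    obtain ⟨hb, ha⟩ := isBounded_iff_bddBelow_bddAbove.1 (hψ.isBounded_setOf_lt htop ht)
    obtain ⟨c, d, h₁, h₂⟩ := (hψ.ordConnected_setOf_lt t).exists_Ioo_subset_subset_Icc hb ha
    exact hg.setLIntegral_preimage_const_mul_le h₁ h₂ hε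
  · have hempty : {x | t < ψ (ε * x)} = ∅ := (hψ.comp_const_mul ε).setOf_lt_eq_empty (by simpa)
    simp [hψ.setOf_lt_eq_empty htψ, hempty]

theorem tendsto_lintegral_mul_rescale (hg : Periodic g 1) (hgm : Measurable g)
    (hP : ∫⁻ x in Ioc 0 1, g x ≠ ∞) {ψ : ℝ → ℝ} (hψ : RadialAntitone ψ) (hψm : Measurable ψ)
    (htop : Tendsto ψ atTop (𝓝 0)) :
    Tendsto (fun ε => ∫⁻ x, g x * ENNReal.ofReal (ε * ψ (ε * x))) (𝓝[>] 0)
      (𝓝 ((∫⁻ x, ENNReal.ofReal (ψ x)) * ∫⁻ x in Ioc 0 1, g x)) := by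
  set P := ∫⁻ x in Ioc 0 1, g x
  have hψ0 := hψ.nonneg htop
  set G : ℝ → ℝ≥0∞ := fun t => volume {u | t < ψ u} * P
  set E : ℝ → ℝ → ℝ≥0∞ := fun ε => (Iio (ψ 0)).indicator fun _ => ENNReal.ofReal ε * P
  have hG : ∫⁻ t in Ioi 0, G t = (∫⁻ x, ENNReal.ofReal (ψ x)) * P := by
    have hlevel : Measurable fun t : ℝ => volume {u | t < ψ u} :=
      Antitone.measurable fun s t hst => measure_mono fun u (hu : t < ψ u) => hst.trans_lt hu
    rw [lintegral_mul_const _ hlevel,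
      lintegral_eq_lintegral_meas_lt _ (ae_of_all _ hψ0) hψm.aemeasurable]
  have hE (ε : ℝ) : ∫⁻ t in Ioi 0, E ε t = ENNReal.ofReal ε * (ENNReal.ofReal (ψ 0) * P) := by
    rw [lintegral_indicator measurableSet_Iio, Measure.restrict_restrict measurableSet_Iio,
      setLIntegral_const, Iio_inter_Ioi, Real.volume_Ioo, sub_zero]
    ring
  have hEm (ε : ℝ) : Measurable (E ε) := measurable_const.indicator measurableSet_Iio
  refine ENNReal.tendsto_nhdsGT_zero_of_le_add_mul (C := ENNReal.ofReal (ψ 0) * P)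
    (ENNReal.mul_ne_top ENNReal.ofReal_ne_top hP) (fun ε hε => ?_) (fun ε hε => ?_)
  all_goals rw [lintegral_mul_ofReal_rescale_eq hgm hψ0 hψm hε.le]
  · calc ∫⁻ t in Ioi 0, ENNReal.ofReal ε * ∫⁻ x in {x | t < ψ (ε * x)}, g x
        ≤ ∫⁻ t in Ioi 0, (E ε t + G t) := setLIntegral_mono' measurableSet_Ioi fun t ht =>
          (hg.setLIntegral_superlevel_rescale_le hψ htop ht hε).1.trans_eq (add_comm _ _)
      _ = _ := by rw [lintegral_add_left (hEm ε), hE, hG, add_comm]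
  · calc (∫⁻ x, ENNReal.ofReal (ψ x)) * P = ∫⁻ t in Ioi 0, G t := hG.symm
      _ ≤ ∫⁻ t in Ioi 0, (ENNReal.ofReal ε * (∫⁻ x in {x | t < ψ (ε * x)}, g x) + E ε t) :=
          setLIntegral_mono' measurableSet_Ioi fun t ht =>
            (hg.setLIntegral_superlevel_rescale_le hψ htop ht hε).2
      _ = _ := by rw [lintegral_add_right _ (hEm ε), hE]

end Function.Periodic

theorem eLpNorm_torusMeasure_eq {p : ℝ} (hp : 0 < p) {f : ℝ → ℂ} (hper : Function.Periodic f 1) :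
    eLpNorm f (ENNReal.ofReal p) torusMeasure = (∫⁻ x in Ioc 0 1, ‖f x‖ₑ ^ p) ^ (1 / p) := by
  have hg : Function.Periodic (fun x => ‖f x‖ₑ ^ p) 1 := fun x => by simp only [hper x]
  unfold torusMeasure
  rw [eLpNorm_ofReal_eq_lintegral hp, setLIntegral_congr Ico_ae_eq_Ioc,
    show Ioc (-(1 / 2) : ℝ) (1 / 2) = Ioc (-(1 / 2)) (-(1 / 2) + 1) by norm_num,
    hg.setLIntegral_Ioc_add_one]

theorem eLpNorm_mul_rescale_eq {p : ℝ} (hp : 0 < p) (f : ℝ → ℂ) {φ : ℝ → ℝ} (hφ0 : ∀ x, 0 ≤ φ x)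
    {ε : ℝ} (hε : 0 < ε) :
    eLpNorm (fun x => f x * Complex.ofReal (ε ^ (1 / p) * φ (ε * x))) (ENNReal.ofReal p) volume
      = (∫⁻ x, ‖f x‖ₑ ^ p * ENNReal.ofReal (ε * φ (ε * x) ^ p)) ^ (1 / p) := by
  rw [eLpNorm_ofReal_eq_lintegral hp]
  congr 1
  refine lintegral_congr fun x => ?_
  have hnonneg : 0 ≤ ε ^ (1 / p) * φ (ε * x) := mul_nonneg (by positivity) (hφ0 _)
  have hpow : (ε ^ (1 / p) * φ (ε * x)) ^ p = ε * φ (ε * x) ^ p := by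
    rw [Real.mul_rpow (by positivity) (hφ0 _), ← Real.rpow_mul hε.le, one_div_mul_cancel hp.ne',
      Real.rpow_one]
  rw [enorm_mul, ENNReal.mul_rpow_of_nonneg _ _ hp.le]
  congr 1
  rw [← ofReal_norm, Complex.norm_real, Real.norm_of_nonneg hnonneg,
    ENNReal.ofReal_rpow_of_nonneg hnonneg hp.le, hpow]

theorem stmt14 (p : ℝ) (hp : 0 < p) (f : ℝ → ℂ) (hf : Measurable f)
    (hper : Function.Periodic f 1)
    (hfin : eLpNorm f (ENNReal.ofReal p) torusMeasure < ∞)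
    (φ : SchwartzMap ℝ ℝ) (heven : ∀ x, φ (-x) = φ x)
    (hmono : AntitoneOn (fun x => φ x) (Set.Ici 0)) :
    Tendsto (fun ε : ℝ => eLpNorm (fun x => f x * Complex.ofReal (ε ^ (1/p) * φ (ε * x)))
        (ENNReal.ofReal p) volume) (𝓝[>] 0)
      (𝓝 (eLpNorm (fun x => φ x) (ENNReal.ofReal p) volume *
          eLpNorm f (ENNReal.ofReal p) torusMeasure)) := by
  have hφ : RadialAntitone φ := radialAntitone_of_even_of_antitoneOn heven hmono
  have hφtop : Tendsto φ atTop (𝓝 0) := φ.tendsto_cocompact.mono_left atTop_le_cocompact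
  have hφ0 := hφ.nonneg hφtop
  have hψtop : Tendsto (fun x => φ x ^ p) atTop (𝓝 0) := by
    simpa [Function.comp_def, Real.zero_rpow hp.ne'] using
      ((Real.continuous_rpow_const hp.le).tendsto 0).comp hφtop
  have hφnorm : eLpNorm (fun x => φ x) (ENNReal.ofReal p) volume
      = (∫⁻ x, ENNReal.ofReal (φ x ^ p)) ^ (1 / p) := by
    simp_rw [eLpNorm_ofReal_eq_lintegral hp, Real.enorm_of_nonneg (hφ0 _),
      ENNReal.ofReal_rpow_of_nonneg (hφ0 _) hp.le]
  have hg : Function.Periodic (fun x => ‖f x‖ₑ ^ p) 1 := fun x => by simp only [hper x]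
  rw [eLpNorm_torusMeasure_eq hp hper] at hfin ⊢
  have hP := ((ENNReal.rpow_lt_top_iff_of_pos (by positivity)).1 hfin).ne
  rw [hφnorm, ← ENNReal.mul_rpow_of_nonneg _ _ (by positivity)]
  refine ((ENNReal.continuous_rpow_const.tendsto _).comp
    (hg.tendsto_lintegral_mul_rescale (hf.enorm.pow_const p) hP (hφ.rpow_const hφ0 hp.le)
      ((Real.continuous_rpow_const hp.le).comp φ.continuous).measurable hψtop)).congr' ?_
  filter_upwards [self_mem_nhdsWithin] with ε hε using (eLpNorm_mul_rescale_eq hp f hφ0 hε).symm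
end

section
/- Let m₁ : ℝ → ℂ be a bounded measurable regulated function on ℝ and α ∈ ℝ. Define m_α(x,y) = m₁(x + αy) on ℝ². Let G(t,s) = π⁻¹ e^{-(t²+s²)}. Then for every (x,y) ∈ ℝ², lim_{ε→0⁺} ∫_{ℝ²} m_α(x - εt, y - εs) G(t,s) dt ds = m_α(x,y); i.e., m_α is G-regulated. The key identity is ∫_{ℝ²} m₁(x + αy - ε(t + αs)) G(t,s) dt ds = ∫_ℝ m₁(x + αy - εt) ψ_α(t) dt where ψ_α(t) = ∫_ℝ G(t - αs, s) ds. -/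
/-!
The shear `(z₁, z₂) ↦ (z₁ + α z₂, z₂)` preserves Lebesgue measure, so Fubini turns the Gaussian
average of `m_α` into a one-dimensional average of `m₁` against `ψ_α`, which is again a Gaussian,
`ψ_α(t) = π⁻¹ √(π / (1 + α²)) e^{-b t²}` with `b = (1 + α²)⁻¹`.

A Gaussian is a superposition of box kernels, `e^{-b t²} = ∫_{|t|}^∞ 2 b r e^{-b r²} dr`.
By Fubini, `∫ e^{-b t²} m(u - ε t) dt = ∫_0^∞ 2 b r e^{-b r²} (∫_{-r}^r m(u - ε t) dt) dr`, and the
inner integral is `2r` times the symmetric average of `m` over `[u - ε r, u + ε r]`, which tends to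
`m(u)` because `m` is regulated. Dominated convergence concludes.
-/

open MeasureTheory Filter Set
open scoped ENNReal NNReal Topology

open Real

theorem measurePreserving_sub_mul_snd (α : ℝ) :
    MeasurePreserving (fun p : ℝ × ℝ => (p.1 - α * p.2, p.2)) := by
  have skew : MeasurePreserving (fun p : ℝ × ℝ => (p.1, p.2 - α * p.1))
      (volume.prod volume) (volume.prod volume) :=
    (MeasurePreserving.id volume).skew_product (by fun_prop)
      (.of_forall fun a => map_sub_right_eq_self volume (α * a))
  exact (Measure.measurePreserving_swap.comp skew).comp Measure.measurePreserving_swap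

section

variable {E : Type*} [NormedAddCommGroup E] [NormedSpace ℝ E]

theorem integral_eq_integral_integral_sub_mul {f : ℝ × ℝ → E} (hf : Integrable f) (α : ℝ) :
    ∫ z, f z = ∫ t, ∫ s, f (t - α * s, s) := by
  have hφ := measurePreserving_sub_mul_snd α
  rw [← hφ.map_eq, integral_map hφ.aemeasurable (by rw [hφ.map_eq]; exact hf.1)]
  exact integral_prod _ ((hφ.integrable_comp hf.1).2 hf)

theorem integral_smul_comp_add_mul_snd [CompleteSpace E] {k : ℝ × ℝ → ℝ} (hk : Integrable k)
    {m : ℝ → E} (hm : StronglyMeasurable m) {M : ℝ} (hM : ∀ x, ‖m x‖ ≤ M) (α : ℝ) :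
    ∫ z, k z • m (z.1 + α * z.2) = ∫ t, (∫ s, k (t - α * s, s)) • m t := by
  have hint : Integrable fun z : ℝ × ℝ => k z • m (z.1 + α * z.2) :=
    hk.smul_of_top_left (memLp_top_of_bound (hm.comp_measurable (by fun_prop)).aestronglyMeasurable
      M (.of_forall fun z => hM _))
  rw [integral_eq_integral_integral_sub_mul hint α]
  simp only [sub_add_cancel, integral_smul_const]

theorem integral_indicator_Ioo_neg_self (φ : ℝ → E) {r : ℝ} (hr : 0 ≤ r) :
    ∫ t, (Ioo (-r) r).indicator φ t = ∫ t in -r..r, φ t := by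
  rw [integral_indicator measurableSet_Ioo, intervalIntegral.integral_of_le (by linarith),
    integral_Ioc_eq_integral_Ioo]

theorem integral_integral_Ioi_abs_smul [CompleteSpace E] {g : ℝ → ℝ} (hg : Measurable g)
    (hg_int : IntegrableOn (fun r => r * g r) (Ioi 0)) {h : ℝ → E} (hh : AEStronglyMeasurable h)
    {M : ℝ} (hM : ∀ t, ‖h t‖ ≤ M) :
    ∫ t, (∫ r in Ioi |t|, g r) • h t = ∫ r in Ioi 0, g r • ∫ t in -r..r, h t := by
  set F : ℝ × ℝ → E := {p | |p.2| < p.1}.indicator fun p => g p.1 • h p.2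
  have hF_r : ∀ r t, F (r, t) = (Ioo (-r) r).indicator (fun t => g r • h t) t := by
    intro r t; simp [F, indicator, abs_lt]
  have hF_t : ∀ r t, F (r, t) = (Ioi |t|).indicator (fun r => g r • h t) r := by
    intro r t; simp [F, indicator]
  have hF_meas : AEStronglyMeasurable F ((volume.restrict (Ioi 0)).prod volume) :=
    ((hg.comp measurable_fst).aestronglyMeasurable.smul hh.comp_snd).indicator
      (measurableSet_lt measurable_snd.abs measurable_fst)
  have hF_int : Integrable F ((volume.restrict (Ioi 0)).prod volume) := by
    refine (integrable_prod_iff hF_meas).2 ⟨.of_forall fun r => ?_, ?_⟩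
    · simp only [hF_r]
      refine (Measure.integrableOn_of_bounded measure_Ioo_lt_top.ne
        (hh.const_smul (g r)) (M := ‖g r‖ * M) (.of_forall fun t => ?_)).integrable_indicator
        measurableSet_Ioo
      simp only [Pi.smul_apply, norm_smul]; gcongr; exact hM t
    refine (hg_int.norm.const_mul (2 * M)).mono' hF_meas.norm.integral_prod_right'
      ((ae_restrict_iff' measurableSet_Ioi).2 (.of_forall fun r (hr : 0 < r) => ?_))
    simp only [hF_r, norm_indicator_eq_indicator_norm]
    rw [integral_indicator_Ioo_neg_self _ hr.le]
    calc ‖∫ t in -r..r, ‖g r • h t‖‖ ≤ ‖g r‖ * M * |r - -r| :=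
          intervalIntegral.norm_integral_le_of_norm_le_const fun t _ => by
            rw [norm_norm, norm_smul]; gcongr; exact hM t
      _ = 2 * M * ‖r * g r‖ := by
          rw [norm_mul, Real.norm_of_nonneg hr.le, abs_of_pos (by linarith)]; ring
  calc ∫ t, (∫ r in Ioi |t|, g r) • h t
      = ∫ t, ∫ r in Ioi 0, F (r, t) := by
        congr 1; ext t
        simp only [hF_t]
        rw [setIntegral_indicator measurableSet_Ioi, Ioi_inter_Ioi, sup_of_le_right (abs_nonneg t),
          integral_smul_const]
    _ = ∫ r in Ioi 0, ∫ t, F (r, t) := by rw [← integral_prod_symm _ hF_int, integral_prod _ hF_int]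
    _ = ∫ r in Ioi 0, g r • ∫ t in -r..r, h t := by
        refine setIntegral_congr_fun measurableSet_Ioi fun r (hr : 0 < r) => ?_
        simp only [hF_r]
        rw [integral_indicator_Ioo_neg_self _ hr.le, intervalIntegral.integral_smul]

theorem intervalIntegral_neg_self_comp_sub_mul (m : ℝ → E) (u r : ℝ) {ε : ℝ} (hε : ε ≠ 0) :
    ∫ t in -r..r, m (u - ε * t) = ε⁻¹ • ∫ t in -(ε * r)..ε * r, m (u + t) := by
  have := intervalIntegral.integral_comp_mul_left (fun x => m (u + x)) (a := -r) (b := r)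
    (neg_ne_zero.2 hε)
  simp only [neg_mul, ← sub_eq_add_neg, mul_neg, neg_neg, inv_neg] at this
  rw [this, intervalIntegral.integral_symm, smul_neg, neg_smul, neg_neg]

theorem continuous_intervalIntegral_neg_self {φ : ℝ → E}
    (hφ : ∀ a b, IntervalIntegrable φ volume a b) :
    Continuous fun r => ∫ t in -r..r, φ t := by
  have h := intervalIntegral.continuous_primitive hφ 0
  refine (h.sub (h.comp continuous_neg)).congr fun r => ?_
  exact intervalIntegral.integral_interval_sub_left (hφ 0 r) (hφ 0 (-r))

theorem intervalIntegrable_of_bound {F : Type*} [NormedAddCommGroup F] {φ : ℝ → F}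
    (hφ : AEStronglyMeasurable φ) {M : ℝ} (hM : ∀ x, ‖φ x‖ ≤ M) (a b : ℝ) :
    IntervalIntegrable φ volume a b :=
  intervalIntegrable_iff.2 <|
    Measure.integrableOn_of_bounded measure_Ioc_lt_top.ne hφ (.of_forall hM)

theorem tendsto_intervalIntegral_comp_sub_mul {m : ℝ → E} {u r : ℝ} (hr : 0 < r)
    (hreg : Tendsto (fun δ : ℝ => (2 * δ)⁻¹ • ∫ t in -δ..δ, m (u + t)) (𝓝[>] 0) (𝓝 (m u))) :
    Tendsto (fun ε => ∫ t in -r..r, m (u - ε * t)) (𝓝[>] 0) (𝓝 ((2 * r) • m u)) := by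
  have hscale : Tendsto (fun ε => r * ε) (𝓝[>] 0) (𝓝[>] 0) :=
    tendsto_iff_comap.2 (comap_mulLeft_nhdsGT_zero hr).ge
  refine ((hreg.comp hscale).const_smul (2 * r)).congr' ?_
  filter_upwards [self_mem_nhdsWithin] with ε (hε : 0 < ε)
  rw [Function.comp_apply, intervalIntegral_neg_self_comp_sub_mul _ _ _ hε.ne', smul_smul,
    mul_comm r ε, show 2 * r * (2 * (ε * r))⁻¹ = ε⁻¹ by field_simp]

theorem tendsto_integral_smul_comp_sub_mul [CompleteSpace E] {K g : ℝ → ℝ}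
    (hK : ∀ t, K t = ∫ r in Ioi |t|, g r) (hg : Measurable g)
    (hg_int : IntegrableOn (fun r => r * g r) (Ioi 0)) {m : ℝ → E} (hm : StronglyMeasurable m)
    {M : ℝ} (hM : ∀ x, ‖m x‖ ≤ M) {u : ℝ}
    (hreg : Tendsto (fun δ : ℝ => (2 * δ)⁻¹ • ∫ t in -δ..δ, m (u + t)) (𝓝[>] 0) (𝓝 (m u))) :
    Tendsto (fun ε => ∫ t, K t • m (u - ε * t)) (𝓝[>] 0) (𝓝 ((∫ t, K t) • m u)) := by
  have hm_ε : ∀ ε, AEStronglyMeasurable fun t => m (u - ε * t) :=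
    fun ε => (hm.comp_measurable (by fun_prop)).aestronglyMeasurable
  have hmass : ∫ t, K t = ∫ r in Ioi 0, 2 * r * g r := by
    have := integral_integral_Ioi_abs_smul hg hg_int (h := fun _ => (1 : ℝ))
      aestronglyMeasurable_const (M := 1) (by simp)
    simp only [smul_eq_mul, mul_one, intervalIntegral.integral_const, sub_neg_eq_add] at this
    simp only [hK, this]
    congr 1; ext r; ring
  rw [hmass, ← integral_smul_const]
  simp only [hK, integral_integral_Ioi_abs_smul hg hg_int (hm_ε _) (fun _ => hM _)]
  refine tendsto_integral_filter_of_dominated_convergence (fun r => 2 * M * ‖r * g r‖)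
    (.of_forall fun ε => ?_) (.of_forall fun ε => ?_) (hg_int.norm.const_mul _) ?_
  · exact (hg.aestronglyMeasurable.smul (continuous_intervalIntegral_neg_self
      (intervalIntegrable_of_bound (hm_ε ε) fun _ => hM _)).aestronglyMeasurable).restrict
  · refine (ae_restrict_iff' measurableSet_Ioi).2 (.of_forall fun r (hr : 0 < r) => ?_)
    calc ‖g r • ∫ t in -r..r, m (u - ε * t)‖ ≤ ‖g r‖ * (M * |r - -r|) := by
          rw [norm_smul]; gcongr
          exact intervalIntegral.norm_integral_le_of_norm_le_const fun t _ => hM _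
      _ = 2 * M * ‖r * g r‖ := by
          rw [norm_mul, Real.norm_of_nonneg hr.le, abs_of_pos (by linarith)]; ring
  · refine (ae_restrict_iff' measurableSet_Ioi).2 (.of_forall fun r (hr : 0 < r) => ?_)
    rw [mul_comm (2 * r), ← smul_smul]
    exact (tendsto_intervalIntegral_comp_sub_mul hr hreg).const_smul (g r)

end

theorem integral_Ioi_mul_exp_neg_mul_sq {b : ℝ} (hb : 0 < b) (a : ℝ) :
    ∫ r in Ioi a, 2 * b * r * exp (-b * r ^ 2) = exp (-b * a ^ 2) := by
  have hderiv : ∀ x, HasDerivAt (fun r => -exp (-b * r ^ 2)) (2 * b * x * exp (-b * x ^ 2)) x := by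
    intro x
    refine (((hasDerivAt_pow 2 x).const_mul (-b)).exp).fun_neg.congr_deriv ?_
    norm_num
    ring
  have hint : Integrable fun r => 2 * b * r * exp (-b * r ^ 2) := by
    simpa only [mul_assoc] using (integrable_mul_exp_neg_mul_sq hb).const_mul (2 * b)
  have hlim : Tendsto (fun r => -exp (-b * r ^ 2)) atTop (𝓝 0) := by
    simpa using (tendsto_exp_atBot.comp
      ((tendsto_pow_atTop two_ne_zero).const_mul_atTop_of_neg (neg_lt_zero.2 hb))).neg
  rw [integral_Ioi_of_hasDerivAt_of_tendsto' (fun x _ => hderiv x) hint.integrableOn hlim]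
  ring

theorem integrableOn_mul_mul_exp_neg_mul_sq {b : ℝ} (hb : 0 < b) :
    IntegrableOn (fun r => r * (2 * b * r * exp (-b * r ^ 2))) (Ioi 0) := by
  refine (((integrable_rpow_mul_exp_neg_mul_sq hb (s := 2) (by norm_num)).const_mul (2 * b)).congr
    (.of_forall fun r => ?_)).integrableOn
  simp only [rpow_two]
  ring

theorem integral_exp_neg_sub_mul_sq_add_sq (α t : ℝ) :
    ∫ s, π⁻¹ * exp (-((t - α * s) ^ 2 + s ^ 2))
      = π⁻¹ * √(π / (1 + α ^ 2)) * exp (-(1 + α ^ 2)⁻¹ * t ^ 2) := by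
  have hβ : 0 < 1 + α ^ 2 := by positivity
  have hcomplete : ∀ s, π⁻¹ * exp (-((t - α * s) ^ 2 + s ^ 2))
      = π⁻¹ * exp (-(1 + α ^ 2)⁻¹ * t ^ 2) *
          exp (-(1 + α ^ 2) * (s - α * t / (1 + α ^ 2)) ^ 2) := by
    intro s
    rw [mul_assoc, ← exp_add]
    congr 2
    field_simp
    ring
  simp only [hcomplete]
  rw [integral_const_mul, integral_sub_right_eq_self (fun s => exp (-(1 + α ^ 2) * s ^ 2)),
    integral_gaussian]
  ring

theorem integrable_exp_neg_sq_add_sq : Integrable fun z : ℝ × ℝ => exp (-(z.1 ^ 2 + z.2 ^ 2)) := by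
  refine ((integrable_exp_neg_mul_sq one_pos).mul_prod (integrable_exp_neg_mul_sq one_pos)).congr
    (.of_forall fun z => ?_)
  simp only [← exp_add]
  ring_nf

theorem stmt18 (m₁ : ℝ → ℂ) (hm : Measurable m₁) (hb : ∃ M : ℝ, ∀ x, ‖m₁ x‖ ≤ M)
    (hreg : ∀ u : ℝ, Tendsto (fun ε : ℝ => (2 * ε)⁻¹ • ∫ t in (-ε)..ε, m₁ (u + t))
      (𝓝[>] 0) (𝓝 (m₁ u)))
    (α : ℝ) :
    (∀ x y : ℝ, Tendsto (fun ε : ℝ =>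
        ∫ z : ℝ × ℝ, m₁ ((x - ε * z.1) + α * (y - ε * z.2)) *
          Complex.ofReal (Real.pi⁻¹ * Real.exp (-(z.1 ^ 2 + z.2 ^ 2))))
      (𝓝[>] 0) (𝓝 (m₁ (x + α * y)))) ∧
    (∀ x y ε : ℝ,
      ∫ z : ℝ × ℝ, m₁ (x + α * y - ε * (z.1 + α * z.2)) *
          Complex.ofReal (Real.pi⁻¹ * Real.exp (-(z.1 ^ 2 + z.2 ^ 2)))
        = ∫ t : ℝ, m₁ (x + α * y - ε * t) *
            Complex.ofReal (∫ s : ℝ, Real.pi⁻¹ * Real.exp (-((t - α * s) ^ 2 + s ^ 2)))) := by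
  obtain ⟨M, hM⟩ := hb
  have hsmul : ∀ (a : ℝ) (w : ℂ), w * a = a • w := fun a w => by rw [Complex.real_smul, mul_comm]
  have key (x y ε : ℝ) := integral_smul_comp_add_mul_snd
    (integrable_exp_neg_sq_add_sq.const_mul π⁻¹) (m := fun v => m₁ (x + α * y - ε * v))
    (hm.stronglyMeasurable.comp_measurable (by fun_prop)) (fun _ => hM _) α
  refine ⟨fun x y => ?_, fun x y ε => by simpa only [hsmul] using key x y ε⟩
  have hpos : 0 < (1 + α ^ 2)⁻¹ := by positivity
  have hconv := (tendsto_integral_smul_comp_sub_mul (K := fun t => exp (-(1 + α ^ 2)⁻¹ * t ^ 2))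
    (g := fun r => 2 * (1 + α ^ 2)⁻¹ * r * exp (-(1 + α ^ 2)⁻¹ * r ^ 2))
    (fun t => by rw [integral_Ioi_mul_exp_neg_mul_sq hpos, sq_abs]) (by fun_prop)
    (integrableOn_mul_mul_exp_neg_mul_sq hpos) hm.stronglyMeasurable (fun _ => hM _)
    (hreg (x + α * y))).const_smul (π⁻¹ * √(π / (1 + α ^ 2)))
  have hnorm : π⁻¹ * √(π / (1 + α ^ 2)) * √(π / (1 + α ^ 2)⁻¹) = 1 := by
    rw [mul_assoc, ← sqrt_mul (by positivity),
      show π / (1 + α ^ 2) * (π / (1 + α ^ 2)⁻¹) = π ^ 2 by field_simp,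
      sqrt_sq pi_pos.le, inv_mul_cancel₀ pi_ne_zero]
  rw [integral_gaussian, smul_smul, hnorm, one_smul] at hconv
  refine hconv.congr fun ε => ?_
  have harg : ∀ z : ℝ × ℝ, x - ε * z.1 + α * (y - ε * z.2) = x + α * y - ε * (z.1 + α * z.2) :=
    fun z => by ring
  simp only [harg, hsmul, key, integral_exp_neg_sub_mul_sq_add_sq, ← integral_smul, smul_smul]
end
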